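/- arXiv:1701.04611 — 2 statements merged into one kernel-verified Lean document; each statement's English description precedes it below -/
import Mathlib

section
/- A 2-cell α = (ᾱ, α̲) in GTop is cartesian for the fibration GTop^co → Top_≅^co if and only if its upstairs component ᾱ is a natural isomorphism. -/
/-!
The downstairs component of a 2-cell of `GTop` is always invertible, so `ᾱ` is invertible
exactly when `α` is an isomorphism in the hom-category `GTop(P, Q)`. An isomorphism is
cartesian because every lift factors uniquely through it as `α⁻¹ ≫ β`, and a cartesian 2-cell
is invertible because its lifts supply an inverse.
-/

open CategoryTheory Bicategory

universe w v u

/-!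
We work with an ambient 2-category `T` of elementary toposes (with natural
numbers object), geometric morphisms, and natural transformations, together
with a predicate `Bdd` singling out the bounded geometric morphisms.
`Top_≅` is recovered by restricting 2-cells downstairs to isomorphisms.
-/

/-- 0-cells of `GTop`: bounded geometric morphisms `p : E → S`. -/
structure GTopObj (T : Type u) [Bicategory.{w, v} T]
    (Bdd : ∀ X Y : T, (X ⟶ Y) → Prop) where
  top : T
  base : T
  p : top ⟶ base
  bounded : Bdd top base p

variable {T : Type u} [Bicategory.{w, v} T] {Bdd : ∀ X Y : T, (X ⟶ Y) → Prop}

/-- 1-cells of `GTop`: squares `(f̄, f̲)` with a specified isomorphism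
`f̄ ≫ p₁ ≅ p₀ ≫ f̲`. -/
structure GTopHom (P Q : GTopObj T Bdd) where
  up : P.top ⟶ Q.top
  down : P.base ⟶ Q.base
  sq : up ≫ Q.p ≅ P.p ≫ down

/-- 2-cells of `GTop`: compatible pairs of natural transformations `(ᾱ, α̲)`,
with the downstairs component `α̲` invertible. -/
@[ext]
structure GTopTwo {P Q : GTopObj T Bdd} (f g : GTopHom P Q) where
  up : f.up ⟶ g.up
  down : f.down ⟶ g.down
  down_isIso : IsIso down
  compat : f.sq.hom ≫ (P.p ◁ down) = (up ▷ Q.p) ≫ g.sq.hom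

/-- The hom-categories of `GTop` (vertical composition of 2-cells). -/
instance {P Q : GTopObj T Bdd} : Category (GTopHom P Q) where
  Hom := GTopTwo
  id f := ⟨𝟙 f.up, 𝟙 f.down, inferInstance, by simp⟩
  comp {f g h} α β :=
    ⟨α.up ≫ β.up, α.down ≫ β.down,
      by haveI := α.down_isIso; haveI := β.down_isIso; infer_instance,
      by
        rw [Bicategory.whiskerLeft_comp, Bicategory.comp_whiskerRight,
          ← Category.assoc, α.compat, Category.assoc, β.compat, ← Category.assoc]⟩
  id_comp α := by apply GTopTwo.ext <;> simp
  comp_id α := by apply GTopTwo.ext <;> simp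
  assoc α β γ := by apply GTopTwo.ext <;> simp

/-- Composition of 1-cells of `GTop` (pasting of squares). -/
def GTopHom.comp {P Q R : GTopObj T Bdd} (f : GTopHom P Q) (g : GTopHom Q R) :
    GTopHom P R where
  up := f.up ≫ g.up
  down := f.down ≫ g.down
  sq := Bicategory.associator _ _ _ ≪≫ Bicategory.whiskerLeftIso f.up g.sq ≪≫
    (Bicategory.associator _ _ _).symm ≪≫ Bicategory.whiskerRightIso f.sq g.down ≪≫
    Bicategory.associator _ _ _

/-- Cartesianness of a 1-cell of `GTop` for the forgetful 2-functor
`GTop^co → Top_≅^co`, in the sense of Buckley's fibrations of bicategories: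
the comparison functor from each hom-category `GTop(r, p₀)` to the
pseudopullback of `GTop(r, p₁) → Top_≅(r.base, p₁.base) ← Top_≅(r.base, p₀.base)`
is essentially surjective and fully faithful. -/
def IsCartesianGTop {P Q : GTopObj T Bdd} (f : GTopHom P Q) : Prop :=
  (∀ (Z : GTopObj T Bdd) (g : GTopHom Z Q) (h : Z.base ⟶ P.base)
      (θ : h ≫ f.down ≅ g.down),
    ∃ (k : GTopHom Z P) (βg : k.comp f ≅ g) (βh : k.down ≅ h),
      GTopTwo.down βg.hom = (βh.hom ▷ f.down) ≫ θ.hom) ∧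
  (∀ (Z : GTopObj T Bdd) (k k' : GTopHom Z P) (u : k.comp f ⟶ k'.comp f)
      (d : k.down ⟶ k'.down), IsIso d →
    GTopTwo.down u = d ▷ f.down →
    ∃! e : k ⟶ k', GTopTwo.down e = d ∧ GTopTwo.up e ▷ f.up = GTopTwo.up u)

/-- A square `w : p ≫ f ≅ q ≫ g` exhibits `P` as a pseudopullback (bilimit) of
`f` and `g`: elementwise statement of the universal property. -/
def IsPseudoPullback {P X Y Z : T} (p : P ⟶ X) (f : X ⟶ Z) (q : P ⟶ Y) (g : Y ⟶ Z)
    (w : p ≫ f ≅ q ≫ g) : Prop :=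
  (∀ (W : T) (a : W ⟶ X) (b : W ⟶ Y) (θ : a ≫ f ≅ b ≫ g),
    ∃ (c : W ⟶ P) (i : c ≫ p ≅ a) (j : c ≫ q ≅ b),
      (i.hom ▷ f) ≫ θ.hom =
        (Bicategory.associator c p f).hom ≫ (c ◁ w.hom) ≫
          (Bicategory.associator c q g).inv ≫ (j.hom ▷ g)) ∧
  (∀ (W : T) (c c' : W ⟶ P) (u : c ≫ p ⟶ c' ≫ p) (v : c ≫ q ⟶ c' ≫ q),
    (Bicategory.associator c p f).hom ≫ (c ◁ w.hom) ≫
        (Bicategory.associator c q g).inv ≫ (v ▷ g) =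
      (u ▷ f) ≫ (Bicategory.associator c' p f).hom ≫ (c' ◁ w.hom) ≫
        (Bicategory.associator c' q g).inv →
    ∃! e : c ⟶ c', (e ▷ p) = u ∧ (e ▷ q) = v)

/-- Cartesianness of a 2-cell `α : f → g` for the fibration
`GTop^co → Top_≅^co` (because of the `co`-dualization this is the cocartesian
lifting property in `GTop`, fibred over the downstairs 2-cells, which are
required to be invertible as 2-cells of `Top_≅`). -/
def IsCartesianTwoGTop {P Q : GTopObj T Bdd} {f g : GTopHom P Q} (α : f ⟶ g) : Prop :=
  ∀ (h : GTopHom P Q) (β : f ⟶ h) (δ : g.down ⟶ h.down), IsIso δ →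
    GTopTwo.down α ≫ δ = GTopTwo.down β →
    ∃! γ : g ⟶ h, GTopTwo.down γ = δ ∧ α ≫ γ = β

namespace GTopTwo

variable {P Q : GTopObj T Bdd} {f g h : GTopHom P Q}

@[simp]
lemma id_up (f : GTopHom P Q) : GTopTwo.up (𝟙 f) = 𝟙 f.up := rfl

@[simp]
lemma id_down (f : GTopHom P Q) : GTopTwo.down (𝟙 f) = 𝟙 f.down := rfl

@[simp]
lemma comp_up (α : f ⟶ g) (β : g ⟶ h) : GTopTwo.up (α ≫ β) = α.up ≫ β.up := rfl

@[simp]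
lemma comp_down (α : f ⟶ g) (β : g ⟶ h) : GTopTwo.down (α ≫ β) = α.down ≫ β.down := rfl

@[ext]
lemma hom_ext {α β : f ⟶ g} (hup : α.up = β.up) (hdown : α.down = β.down) : α = β :=
  GTopTwo.ext hup hdown

instance (α : f ⟶ g) : IsIso α.down := α.down_isIso

def upFunctor (P Q : GTopObj T Bdd) : GTopHom P Q ⥤ (P.top ⟶ Q.top) where
  obj f := f.up
  map α := α.up

def downFunctor (P Q : GTopObj T Bdd) : GTopHom P Q ⥤ (P.base ⟶ Q.base) where
  obj f := f.down
  map α := α.down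

@[simp]
lemma inv_down (α : f ⟶ g) [IsIso α] : (inv α).down = inv α.down :=
  (downFunctor P Q).map_inv α

lemma isIso_up_of_isIso (α : f ⟶ g) [IsIso α] : IsIso α.up :=
  (upFunctor P Q).map_isIso α

lemma isIso_of_isIso_up (α : f ⟶ g) [IsIso α.up] : IsIso α := by
  let αinv : g ⟶ f :=
    ⟨inv α.up, inv α.down, inferInstance, by
      rw [← cancel_epi (α.up ▷ Q.p), ← reassoc_of% α.compat]
      simp⟩
  exact ⟨αinv, by ext <;> simp [αinv], by ext <;> simp [αinv]⟩

end GTopTwo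

namespace IsCartesianTwoGTop

variable {P Q : GTopObj T Bdd} {f g : GTopHom P Q}

lemma of_isIso (α : f ⟶ g) [IsIso α] : IsCartesianTwoGTop α := by
  intro h β δ _ hβ
  refine ⟨inv α ≫ β, ⟨by simp [← hβ], by simp⟩, fun γ hγ => by simp [← hγ.2]⟩

/-- The inverse of `α` is the lift of `𝟙 f` along `inv α.down`; uniqueness of lifts of `α`
along `𝟙 g.down` makes it a two-sided inverse. -/
lemma isIso {α : f ⟶ g} (hα : IsCartesianTwoGTop α) : IsIso α := by
  obtain ⟨γ, ⟨hγ_down, hαγ⟩, -⟩ := hα f (𝟙 f) (inv α.down) inferInstance (by simp)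
  obtain ⟨_, _, hunique⟩ := hα g α (𝟙 g.down) inferInstance (by simp)
  have hγα : γ ≫ α = 𝟙 g :=
    (hunique (γ ≫ α) ⟨by simp [hγ_down], by rw [reassoc_of% hαγ]⟩).trans
      (hunique (𝟙 g) ⟨rfl, by simp⟩).symm
  exact ⟨γ, hαγ, hγα⟩

end IsCartesianTwoGTop

/-- a 2-cell `α = (ᾱ, α̲)` in `GTop` is cartesian for the
fibration `GTop^co → Top_≅^co` if and only if its upstairs component `ᾱ`
is a (natural) isomorphism. -/
theorem gtop_twoCell_cartesian_iff_up_iso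
    {P Q : GTopObj T Bdd} {f g : GTopHom P Q} (α : f ⟶ g) :
    IsCartesianTwoGTop α ↔ IsIso (GTopTwo.up α) :=
  ⟨fun hα => have := hα.isIso; GTopTwo.isIso_up_of_isIso α,
    fun _ => have := GTopTwo.isIso_of_isIso_up α; .of_isIso α⟩
end

section
/- Let T be an AU-context. For any composable pair of (non-strict) AU-functors f₀ : A₀ → A₁ and f₁ : A₁ → A₂, and any strict model M of T in A₀, the strictification operation satisfies f₁*(f₀* M) = (f₀ f₁)* M, where f* M denotes the unique strict model of T isomorphic to the non-strict model f·M (obtained by applying f) and agreeing with it on all primitive nodes of T. Hence Mod_s(T, −) is a strict 2-functor from the 2-category AU of arithmetic universes and non-strict AU-functors to Cat. -/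
/-!
We axiomatize Vickers's framework: arithmetic universes, non-strict AU-functors,
models of the fixed context `T`, strictness, isomorphism of models, agreement on
primitive nodes, application `f · M` of an AU-functor to a model, and the
strictification operator `str` (the key fact: every model is uniquely isomorphic
to a unique strict model agreeing with it on all primitive nodes).
-/

universe u v

/-- Axiomatic setup for models of a fixed AU-context `T` in arithmetic universes. -/
structure AUModelSetup where
  /-- arithmetic universes -/
  AU : Type u
  /-- non-strict AU-functors -/
  Fun : AU → AU → Type v
  /-- identity AU-functor -/
  idF : ∀ A, Fun A A
  /-- composition of AU-functors -/
  compF : ∀ {A B C : AU}, Fun A B → Fun B C → Fun A C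
  /-- models of the context `T` in an AU -/
  Model : AU → Type v
  /-- strictness of a model -/
  strict : ∀ {A}, Model A → Prop
  /-- existence of an isomorphism of models of `T` -/
  iso : ∀ {A}, Model A → Model A → Prop
  /-- agreement on all primitive nodes of `T` -/
  agrees : ∀ {A}, Model A → Model A → Prop
  /-- application `f · M` of a (non-strict) AU-functor to a model -/
  app : ∀ {A B}, Fun A B → Model A → Model B
  app_id : ∀ {A} (M : Model A), app (idF A) M = M
  app_comp : ∀ {A B C : AU} (f : Fun A B) (g : Fun B C) (M : Model A),
    app g (app f M) = app (compF f g) M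
  iso_refl : ∀ {A} (M : Model A), iso M M
  iso_symm : ∀ {A} {M N : Model A}, iso M N → iso N M
  iso_trans : ∀ {A} {M N P : Model A}, iso M N → iso N P → iso M P
  agrees_refl : ∀ {A} (M : Model A), agrees M M
  agrees_symm : ∀ {A} {M N : Model A}, agrees M N → agrees N M
  agrees_trans : ∀ {A} {M N P : Model A}, agrees M N → agrees N P → agrees M P
  /-- AU-functors preserve isomorphism of models -/
  iso_app : ∀ {A B} (f : Fun A B) {M N : Model A}, iso M N → iso (app f M) (app f N)
  /-- AU-functors preserve agreement on primitive nodes -/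
  agrees_app : ∀ {A B} (f : Fun A B) {M N : Model A}, agrees M N → agrees (app f M) (app f N)
  /-- strictification: the unique strict model isomorphic to a given model and
  agreeing with it on all primitive nodes -/
  str : ∀ {A}, Model A → Model A
  str_strict : ∀ {A} (M : Model A), strict (str M)
  str_iso : ∀ {A} (M : Model A), iso (str M) M
  str_agrees : ∀ {A} (M : Model A), agrees (str M) M
  str_unique : ∀ {A} {M N : Model A}, strict N → iso N M → agrees N M → N = str M

namespace AUModelSetup

variable (S : AUModelSetup.{u, v})

theorem str_eq_str_of_iso_of_agrees {A : S.AU} {M N : S.Model A} (hiso : S.iso M N)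
    (hagr : S.agrees M N) : S.str M = S.str N :=
  S.str_unique (S.str_strict M) (S.iso_trans (S.str_iso M) hiso)
    (S.agrees_trans (S.str_agrees M) hagr)

theorem str_app_str {A B : S.AU} (f : S.Fun A B) (M : S.Model A) :
    S.str (S.app f (S.str M)) = S.str (S.app f M) :=
  S.str_eq_str_of_iso_of_agrees (S.iso_app f (S.str_iso M)) (S.agrees_app f (S.str_agrees M))

theorem str_eq_self {A : S.AU} {M : S.Model A} (hM : S.strict M) : S.str M = M :=
  (S.str_unique hM (S.iso_refl M) (S.agrees_refl M)).symm

end AUModelSetup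

/-- The paper's `f* M` is `S.str (S.app f M)`. -/
theorem strictification_strictly_functorial (S : AUModelSetup.{u, v})
    {A₀ A₁ A₂ : S.AU} (f₀ : S.Fun A₀ A₁) (f₁ : S.Fun A₁ A₂)
    (M : S.Model A₀) (hM : S.strict M) :
    S.str (S.app f₁ (S.str (S.app f₀ M))) = S.str (S.app (S.compF f₀ f₁) M) ∧
    S.str (S.app (S.idF A₀) M) = M :=
  ⟨by rw [S.str_app_str, S.app_comp], by rw [S.app_id, S.str_eq_self hM]⟩
end
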